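/- arXiv:1411.1735 — 3 statements merged into one kernel-verified Lean document; each statement's English description precedes it below -/
import Mathlib

section
/- Let p ∈ ℝ³ with r = ‖p‖ > 0 and let A be its cross-product matrix. Then exp(A) · ∫₀¹ exp(-y·A) dy = I + ((r - sin r)/r³)·A² + ((1 - cos r)/r²)·A. -/
/-!
Since `A³ = -r² A`, the exponential series collapses to Rodrigues' formula
`exp (t A) = 1 + (sin (t r) / r) A + ((1 - cos (t r)) / r²) A²`.
As `A` commutes with itself, `exp A · exp (-y A) = exp ((1 - y) A)`, so the left-hand side is
`∫₀¹ exp (s A) ds`, which is obtained by integrating Rodrigues' formula coefficientwise.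
-/

open Matrix

/-- The cross-product matrix of `p`: `A.mulVec v = p ×₃ v`. -/
def crossMatrix (p : Fin 3 → ℝ) : Matrix (Fin 3) (Fin 3) ℝ :=
  !![0, -p 2, p 1; p 2, 0, -p 0; -p 1, p 0, 0]

open NormedSpace Real MeasureTheory
open scoped Nat

section PowThree

variable {𝔸 : Type*} [Ring 𝔸] [Algebra ℝ 𝔸] {A : 𝔸} {r : ℝ}

lemma pow_two_mul_add_one_of_pow_three (hA : A ^ 3 = (-r ^ 2) • A) (n : ℕ) :
    A ^ (2 * n + 1) = (-r ^ 2) ^ n • A := by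
  induction n with
  | zero => simp
  | succ n ih =>
    rw [show 2 * (n + 1) + 1 = 2 + (2 * n + 1) by ring, pow_add, ih, mul_smul_comm,
      ← pow_succ, hA, smul_smul, ← pow_succ]

lemma pow_two_mul_add_two_of_pow_three (hA : A ^ 3 = (-r ^ 2) • A) (n : ℕ) :
    A ^ (2 * n + 2) = (-r ^ 2) ^ n • A ^ 2 := by
  rw [pow_succ, pow_two_mul_add_one_of_pow_three hA, smul_mul_assoc, ← sq]

variable [TopologicalSpace 𝔸] [IsTopologicalRing 𝔸] [ContinuousSMul ℝ 𝔸] [T2Space 𝔸]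

theorem exp_smul_of_pow_three (hA : A ^ 3 = (-r ^ 2) • A) (hr : r ≠ 0) (t : ℝ) :
    exp (t • A) = 1 + (sin (t * r) / r) • A + ((1 - cos (t * r)) / r ^ 2) • A ^ 2 := by
  rw [exp_eq_tsum ℝ]
  refine HasSum.tsum_eq ?_
  have hodd : HasSum (fun n : ℕ => ((2 * n + 1)! : ℝ)⁻¹ • (t • A) ^ (2 * n + 1))
      ((sin (t * r) / r) • A) := by
    refine ((hasSum_sin (t * r)).div_const r).smul_const A |>.congr_fun fun n => ?_
    rw [smul_pow, pow_two_mul_add_one_of_pow_three hA, smul_smul, smul_smul]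
    congr 1
    field_simp
    ring
  have hcos_tail : HasSum (fun n : ℕ => (-1) ^ (n + 1) * (t * r) ^ (2 * n + 2) / (2 * n + 2)!)
      (cos (t * r) - 1) := by
    simpa [mul_add_one] using (hasSum_nat_add_iff' 1).mpr (hasSum_cos (t * r))
  have heven_tail : HasSum (fun n : ℕ => ((2 * n + 2)! : ℝ)⁻¹ • (t • A) ^ (2 * n + 2))
      (((1 - cos (t * r)) / r ^ 2) • A ^ 2) := by
    have := (hcos_tail.neg.div_const (r ^ 2)).smul_const (A ^ 2)
    rw [neg_sub] at this
    refine this.congr_fun fun n => ?_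
    rw [smul_pow, pow_two_mul_add_two_of_pow_three hA, smul_smul, smul_smul]
    congr 1
    field_simp
    ring
  have heven : HasSum (fun n : ℕ => ((2 * n)! : ℝ)⁻¹ • (t • A) ^ (2 * n))
      (1 + ((1 - cos (t * r)) / r ^ 2) • A ^ 2) := by
    refine (hasSum_nat_add_iff' 1).mp ?_
    simpa [mul_add_one] using heven_tail
  rw [add_right_comm]
  exact heven.even_add_odd (f := fun n : ℕ => (n ! : ℝ)⁻¹ • (t • A) ^ n) hodd

end PowThree

section IntervalIntegral

variable {l m n : Type*} {a b : ℝ}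

lemma Matrix.mul_of_intervalIntegral [Fintype m] (M : Matrix l m ℝ) {N : ℝ → Matrix m n ℝ}
    (hN : Continuous N) :
    M * Matrix.of (fun i j => ∫ y in a..b, N y i j) =
      Matrix.of (fun i j => ∫ y in a..b, (M * N y) i j) := by
  ext i j
  simp only [Matrix.mul_apply, Matrix.of_apply]
  rw [intervalIntegral.integral_finsetSum]
  · simp only [intervalIntegral.integral_const_mul]
  · intro k _
    exact ((hN.matrix_elem k j).const_mul _).intervalIntegrable _ _

lemma Matrix.of_intervalIntegral_add_smul_add_smul (C A B : Matrix m n ℝ) {f g : ℝ → ℝ}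
    (hf : IntervalIntegrable f volume a b) (hg : IntervalIntegrable g volume a b) :
    Matrix.of (fun i j => ∫ y in a..b, (C + f y • A + g y • B) i j) =
      (b - a) • C + (∫ y in a..b, f y) • A + (∫ y in a..b, g y) • B := by
  ext i j
  simp only [Matrix.of_apply, Matrix.add_apply, Matrix.smul_apply, smul_eq_mul]
  rw [intervalIntegral.integral_add ((intervalIntegrable_const).add (hf.mul_const _))
      (hg.mul_const _), intervalIntegral.integral_add intervalIntegrable_const (hf.mul_const _),
    intervalIntegral.integral_mul_const, intervalIntegral.integral_mul_const,
    intervalIntegral.integral_const, smul_eq_mul]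

end IntervalIntegral

lemma integral_sin_mul_div {r : ℝ} (hr : r ≠ 0) :
    ∫ s in (0 : ℝ)..1, sin (s * r) / r = (1 - cos r) / r ^ 2 := by
  rw [intervalIntegral.integral_div, intervalIntegral.integral_comp_mul_right sin hr,
    integral_sin]
  simp only [zero_mul, cos_zero, one_mul, smul_eq_mul]
  field_simp

lemma integral_one_sub_cos_mul_div {r : ℝ} (hr : r ≠ 0) :
    ∫ s in (0 : ℝ)..1, (1 - cos (s * r)) / r ^ 2 = (r - sin r) / r ^ 3 := by
  rw [intervalIntegral.integral_div, intervalIntegral.integral_sub intervalIntegrable_const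
      ((by fun_prop : Continuous fun s : ℝ => cos (s * r)).intervalIntegrable _ _),
    intervalIntegral.integral_comp_mul_right (fun s => cos s) hr, integral_cos]
  simp only [intervalIntegral.integral_const, sub_zero, smul_eq_mul, mul_one, one_mul, zero_mul,
    sin_zero]
  field_simp

lemma crossMatrix_pow_three (p : Fin 3 → ℝ) :
    crossMatrix p ^ 3 = (-(p 0 ^ 2 + p 1 ^ 2 + p 2 ^ 2)) • crossMatrix p := by
  ext i j
  fin_cases i <;> fin_cases j <;>
    simp [crossMatrix, pow_succ, Matrix.mul_apply, Fin.sum_univ_succ] <;> ring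

theorem stmt_4 (p : Fin 3 → ℝ) (r : ℝ) (hr : 0 < r)
    (hr2 : r ^ 2 = p 0 ^ 2 + p 1 ^ 2 + p 2 ^ 2) :
    NormedSpace.exp (crossMatrix p) *
        (Matrix.of fun i j : Fin 3 =>
          ∫ y in (0:ℝ)..1, NormedSpace.exp (-(y • crossMatrix p)) i j) =
      1 + ((r - Real.sin r) / r ^ 3) • (crossMatrix p) ^ 2
        + ((1 - Real.cos r) / r ^ 2) • crossMatrix p := by
  set A := crossMatrix p
  have hexp := exp_smul_of_pow_three (by rw [crossMatrix_pow_three, hr2]) hr.ne' (A := A)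
  have hcont : Continuous fun t : ℝ => exp (t • A) := by simp_rw [hexp]; fun_prop
  have hshift (y : ℝ) : exp A * exp (-(y • A)) = exp ((1 - y) • A) := by
    rw [← Matrix.exp_add_of_commute _ _ ((Commute.refl A).smul_right y).neg_right, sub_smul,
      one_smul, sub_eq_add_neg]
  have hsubst (i j : Fin 3) :
      ∫ y in (0:ℝ)..1, exp ((1 - y) • A) i j = ∫ s in (0:ℝ)..1, exp (s • A) i j := by
    simpa using
      intervalIntegral.integral_comp_sub_left (a := 0) (b := 1) (fun s => exp (s • A) i j) 1
  rw [Matrix.mul_of_intervalIntegral _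
    (by simpa only [Function.comp_def, neg_smul] using hcont.comp continuous_neg)]
  simp_rw [hshift, hsubst, hexp]
  rw [Matrix.of_intervalIntegral_add_smul_add_smul, integral_sin_mul_div hr.ne',
    integral_one_sub_cos_mul_div hr.ne']
  · simp only [sub_zero, one_smul]
    abel
  all_goals exact Continuous.intervalIntegrable (by fun_prop) _ _
end

section
/- Suppose d : ℝ × ℝ → ℝ³ (depending on s and t) is twice continuously differentiable and there exist continuously differentiable vector fields κ, ω : ℝ × ℝ → ℝ³ such that ∂ₛd = κ × d and ∂ₜd = ω × d at every point. Then (∂ₜκ - ∂ₛω - ω × κ) × d = 0 at every point. -/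
/-!
Differentiating `∂ₛd = κ × d` in `t` and `∂ₜd = ω × d` in `s` by the Leibniz rule, and
substituting the two equations back, gives `∂ₜ∂ₛd = κ × (ω × d) + ∂ₜκ × d` and
`∂ₛ∂ₜd = ω × (κ × d) + ∂ₛω × d`. These agree by symmetry of the second derivative, and the
Jacobi identity `ω × (κ × d) - κ × (ω × d) = (ω × κ) × d` turns their difference into
`(∂ₜκ - ∂ₛω - ω × κ) × d`.
-/

open Matrix

noncomputable def crossProductCLM : (Fin 3 → ℝ) →L[ℝ] (Fin 3 → ℝ) →L[ℝ] (Fin 3 → ℝ) :=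
  LinearMap.toContinuousLinearMap <|
    LinearMap.toContinuousLinearMap.toLinearMap ∘ₗ crossProduct

@[simp]
lemma crossProductCLM_apply (a b : Fin 3 → ℝ) : crossProductCLM a b = a ⨯₃ b := rfl

section Calculus

variable {E : Type*} [NormedAddCommGroup E] [NormedSpace ℝ E]

lemma fderiv_cross_apply {f g : E → Fin 3 → ℝ} {z : E}
    (hf : DifferentiableAt ℝ f z) (hg : DifferentiableAt ℝ g z) (v : E) :
    fderiv ℝ (fun y => f y ⨯₃ g y) z v = f z ⨯₃ fderiv ℝ g z v + fderiv ℝ f z v ⨯₃ g z := by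
  rw [show (fun y => f y ⨯₃ g y) = fun y => crossProductCLM (f y) (g y) from rfl,
    crossProductCLM.fderiv_of_bilinear hf hg]
  simp [ContinuousLinearMap.precompR, ContinuousLinearMap.precompL]

variable {F : Type*} [NormedAddCommGroup F] [NormedSpace ℝ F]

lemma fderiv_fderiv_apply_comm {f : E → F} {z : E} (hf : ContDiffAt ℝ 2 f z) (v w : E) :
    fderiv ℝ (fun y => fderiv ℝ f y v) z w = fderiv ℝ (fun y => fderiv ℝ f y w) z v := by
  have hf' : DifferentiableAt ℝ (fderiv ℝ f) z :=
    (hf.fderiv_right (m := 1) (by norm_num)).differentiableAt one_ne_zero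
  rw [fderiv_clm_apply hf' (differentiableAt_const v),
    fderiv_clm_apply hf' (differentiableAt_const w)]
  simpa using hf.isSymmSndFDerivAt (by simp [minSmoothness_of_isRCLikeNormedField]) w v

end Calculus

lemma cross_eq_zero_of_cross_cross_add_eq {a b κ ω d : Fin 3 → ℝ}
    (h : κ ⨯₃ (ω ⨯₃ d) + a ⨯₃ d = ω ⨯₃ (κ ⨯₃ d) + b ⨯₃ d) :
    (a - b - ω ⨯₃ κ) ⨯₃ d = 0 := by
  rw [map_sub, map_sub, LinearMap.sub_apply, LinearMap.sub_apply, cross_cross]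
  linear_combination h

theorem stmt_6 (d κ ω : ℝ × ℝ → Fin 3 → ℝ)
    (hd : ContDiff ℝ 2 d) (hκ : ContDiff ℝ 1 κ) (hω : ContDiff ℝ 1 ω)
    (hs : ∀ z : ℝ × ℝ, fderiv ℝ d z (1, 0) = κ z ⨯₃ d z)
    (ht : ∀ z : ℝ × ℝ, fderiv ℝ d z (0, 1) = ω z ⨯₃ d z) :
    ∀ z : ℝ × ℝ,
      (fderiv ℝ κ z (0, 1) - fderiv ℝ ω z (1, 0) - ω z ⨯₃ κ z) ⨯₃ d z = 0 := by
  intro z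
  have hdz : DifferentiableAt ℝ d z := hd.contDiffAt.differentiableAt two_ne_zero
  have hts : fderiv ℝ (fun y => fderiv ℝ d y (1, 0)) z (0, 1)
      = κ z ⨯₃ (ω z ⨯₃ d z) + fderiv ℝ κ z (0, 1) ⨯₃ d z := by
    rw [funext hs, fderiv_cross_apply (hκ.contDiffAt.differentiableAt one_ne_zero) hdz, ht]
  have hst : fderiv ℝ (fun y => fderiv ℝ d y (0, 1)) z (1, 0)
      = ω z ⨯₃ (κ z ⨯₃ d z) + fderiv ℝ ω z (1, 0) ⨯₃ d z := by
    rw [funext ht, fderiv_cross_apply (hω.contDiffAt.differentiableAt one_ne_zero) hdz, hs]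
  apply cross_eq_zero_of_cross_cross_add_eq
  rw [← hts, ← hst, fderiv_fderiv_apply_comm hd.contDiffAt]
end

section
/- Let p : ℝ² → ℝ³ be C¹ with ‖p(s,t)‖ = r(s,t) > 0, and define κ(s,t) = ∂ₛp + ((r - sin r)/r³)(⟨p, ∂ₛp⟩p - r² ∂ₛp) - ((1 - cos r)/r²)(p × ∂ₛp). Then κ = M(p)·∂ₛp where M(p) = I + ((r - sin r)/r³)A² - ((1 - cos r)/r²)A with A the cross-product matrix of p, and det M(p) = 2(1 - cos r)/r². -/
open Matrix

/-!
`A = crossMatrix p` acts as `v ↦ p × v`, so `A² v = (p ⬝ v) p - ‖p‖² v` and `κ = M(p) ∂ₛp` is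
immediate. For the determinant, `A` is skew with eigenvalues `0, ± i ‖p‖`, hence
`det (1 + a A² - b A) = (1 - a ‖p‖²)² + b² ‖p‖²`; with `‖p‖ = r` this is
`(sin r / r)² + ((1 - cos r) / r)²`, which equals `2 (1 - cos r) / r²` by `sin² + cos² = 1`.
-/

theorem crossMatrix_mulVec (p v : Fin 3 → ℝ) : crossMatrix p *ᵥ v = p ⨯₃ v := by
  ext i
  fin_cases i <;> simp [crossMatrix, cross_apply, mulVec, dotProduct, Fin.sum_univ_three] <;> ring

theorem crossMatrix_sq_mulVec (p v : Fin 3 → ℝ) :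
    crossMatrix p ^ 2 *ᵥ v = (p ⬝ᵥ v) • p - (p ⬝ᵥ p) • v := by
  rw [sq, ← mulVec_mulVec, crossMatrix_mulVec, crossMatrix_mulVec,
    cross_cross_eq_smul_sub_smul']

theorem det_one_add_smul_crossMatrix_sq_sub_smul (p : Fin 3 → ℝ) (a b : ℝ) :
    (1 + a • crossMatrix p ^ 2 - b • crossMatrix p).det =
      (1 - a * (p ⬝ᵥ p)) ^ 2 + b ^ 2 * (p ⬝ᵥ p) := by
  simp [crossMatrix, sq, det_fin_three, one_fin_three, vec3_dotProduct]
  ring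

theorem det_one_add_smul_crossMatrix_sq_sub_smul_of_dotProduct_self {p : Fin 3 → ℝ} {r : ℝ}
    (hr : r ≠ 0) (hp : p ⬝ᵥ p = r ^ 2) :
    (1 + ((r - Real.sin r) / r ^ 3) • crossMatrix p ^ 2
        - ((1 - Real.cos r) / r ^ 2) • crossMatrix p).det = 2 * (1 - Real.cos r) / r ^ 2 := by
  rw [det_one_add_smul_crossMatrix_sq_sub_smul, hp]
  field_simp
  linear_combination Real.sin_sq_add_cos_sq r

theorem stmt_13_general (p : ℝ × ℝ → Fin 3 → ℝ)
    (r : ℝ × ℝ → ℝ) (hr : ∀ z, 0 < r z)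
    (hr2 : ∀ z, r z ^ 2 = p z 0 ^ 2 + p z 1 ^ 2 + p z 2 ^ 2)
    (κ : ℝ × ℝ → Fin 3 → ℝ)
    (hκ : κ = fun z =>
      fderiv ℝ p z (1, 0)
        + ((r z - Real.sin (r z)) / r z ^ 3) •
            ((p z ⬝ᵥ fderiv ℝ p z (1, 0)) • p z - r z ^ 2 • fderiv ℝ p z (1, 0))
        - ((1 - Real.cos (r z)) / r z ^ 2) • (p z ⨯₃ fderiv ℝ p z (1, 0)))
    (M : ℝ × ℝ → Matrix (Fin 3) (Fin 3) ℝ)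
    (hM : M = fun z =>
      1 + ((r z - Real.sin (r z)) / r z ^ 3) • (crossMatrix (p z)) ^ 2
        - ((1 - Real.cos (r z)) / r z ^ 2) • crossMatrix (p z)) :
    (∀ z, κ z = (M z).mulVec (fderiv ℝ p z (1, 0))) ∧
      ∀ z, (M z).det = 2 * (1 - Real.cos (r z)) / r z ^ 2 := by
  have hnorm : ∀ z, p z ⬝ᵥ p z = r z ^ 2 := fun z => by
    rw [hr2, vec3_dotProduct]; ring
  subst hκ hM
  refine ⟨fun z => ?_, fun z => ?_⟩
  · simp only [sub_mulVec, add_mulVec, one_mulVec, smul_mulVec, crossMatrix_sq_mulVec,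
      crossMatrix_mulVec, hnorm]
  · exact det_one_add_smul_crossMatrix_sq_sub_smul_of_dotProduct_self (hr z).ne' (hnorm z)

theorem stmt_13 (p : ℝ × ℝ → Fin 3 → ℝ) (hp : ContDiff ℝ 1 p)
    (r : ℝ × ℝ → ℝ) (hr : ∀ z, 0 < r z)
    (hr2 : ∀ z, r z ^ 2 = p z 0 ^ 2 + p z 1 ^ 2 + p z 2 ^ 2)
    (κ : ℝ × ℝ → Fin 3 → ℝ)
    (hκ : κ = fun z =>
      fderiv ℝ p z (1, 0)
        + ((r z - Real.sin (r z)) / r z ^ 3) •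
            ((p z ⬝ᵥ fderiv ℝ p z (1, 0)) • p z - r z ^ 2 • fderiv ℝ p z (1, 0))
        - ((1 - Real.cos (r z)) / r z ^ 2) • (p z ⨯₃ fderiv ℝ p z (1, 0)))
    (M : ℝ × ℝ → Matrix (Fin 3) (Fin 3) ℝ)
    (hM : M = fun z =>
      1 + ((r z - Real.sin (r z)) / r z ^ 3) • (crossMatrix (p z)) ^ 2
        - ((1 - Real.cos (r z)) / r z ^ 2) • crossMatrix (p z)) :
    (∀ z, κ z = (M z).mulVec (fderiv ℝ p z (1, 0))) ∧
      ∀ z, (M z).det = 2 * (1 - Real.cos (r z)) / r z ^ 2 :=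
  stmt_13_general p r hr hr2 κ hκ M hM
end
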